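/- Let V be a module over the extended Yangian X(osp_{1|2n}) with n ≥ 2, and set V⁺ = {η ∈ V : t_{1j}(u)η = 0 for all j > 1 and t_{i,1′}(u)η = 0 for all i < 1′}, where 1′ = 2n+1. Then V⁺ is stable under the action of all operators t_{ij}(u) with 2 ≤ i, j ≤ 2n. -/

import Mathlib

/-!
Common definitions for the Yangian `X(osp_{1|2n})` associated with the orthosymplectic
Lie superalgebra `osp(1|2n)`, following Molev, "Representations of the Yangians
associated with Lie superalgebras osp(1|2n)".

Indices are 0-based: the index set {1,…,2n+1} of the paper corresponds to `Fin (2n+1)`,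
the involution i ↦ i′ = 2n−i+2 corresponds to `pr : i ↦ 2n−i`, the parity ī is 1 unless
i is the middle index `n`, and τ_i = 1 for i ≤ n and −1 for i > n.

The extended Yangian is presented by the coefficients `t_{ij}^{(r)}` (`r ≥ 1`) of the series
`t_{ij}(u) = δ_{ij} + Σ_{r≥1} t_{ij}^{(r)} u^{−r}`, subject to the defining RTT relations,
written in the equivalent explicit component form (formula (2.9) of the paper), with
denominators cleared.  Working with the variables `x = u⁻¹` and `y = v⁻¹`, so that
`u − v = (y−x)/(xy)` and `u − v − κ = (y − x − κxy)/(xy)`, the relation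
`[t_{ij}(u), t_{kl}(v)] = (u−v)⁻¹ (⋯) − (u−v−κ)⁻¹ (⋯)` becomes the power series identity
`relL = relR` below, and the Yangian is the quotient of the free algebra by the
coefficient-wise relations.
-/

noncomputable section

namespace OspYangian

open Finset

/-- The size of the index set: `2n+1`. -/
abbrev NN (n : ℕ) : ℕ := 2 * n + 1

/-- Convenient constructor for indices. -/
def idx {n : ℕ} (i : ℕ) (h : i < 2 * n + 1) : Fin (NN n) := ⟨i, h⟩

/-- The involution `i ↦ i′` (0-based: `i ↦ 2n − i`). -/
def pr {n : ℕ} (i : Fin (NN n)) : Fin (NN n) := idx (2 * n - (i : ℕ)) (by omega)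

/-- The parity `ī`: `0` for the (even) middle index, `1` for the (odd) remaining ones. -/
def pb {n : ℕ} (i : Fin (NN n)) : ℕ := if (i : ℕ) = n then 0 else 1

/-- The sign `τ_i`: `1` for `i ≤ n`, `−1` for `i > n` (0-based). -/
def tau {n : ℕ} (i : Fin (NN n)) : ℂ := if (i : ℕ) ≤ n then 1 else -1

/-- `κ = −n − 1/2`. -/
def kappa (n : ℕ) : ℂ := -(n : ℂ) - 1 / 2

/-- The sign `(−1)^m`. -/
def sg (m : ℕ) : ℂ := (-1 : ℂ) ^ m

section GenericSeries

variable {I : Type*} {A : Type*} [Ring A] [Algebra ℂ A]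

/-- Given a family `t i j : ℕ → A` of coefficients of series `t_{ij}(u) = Σ_r t_{ij}^{(r)} u^{−r}`,
the series `t_{ij}(u)` as an element of `A⟦x⟧⟦y⟧` (constant in `y`), where `x = u⁻¹`. -/
def Tx (t : I → I → ℕ → A) (i j : I) : PowerSeries (PowerSeries A) :=
  PowerSeries.C (R := PowerSeries A) (PowerSeries.mk (t i j))

/-- The series `t_{ij}(v)` as an element of `A⟦x⟧⟦y⟧` (constant in `x`), where `y = v⁻¹`. -/
def Ty (t : I → I → ℕ → A) (i j : I) : PowerSeries (PowerSeries A) :=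
  PowerSeries.mk fun r => PowerSeries.C (R := A) (t i j r)

/-- The element `x = u⁻¹` of `A⟦x⟧⟦y⟧`. -/
def Xv (A : Type*) [Ring A] : PowerSeries (PowerSeries A) :=
  PowerSeries.C (R := PowerSeries A) PowerSeries.X

/-- The element `y = v⁻¹` of `A⟦x⟧⟦y⟧`. -/
def Yv (A : Type*) [Ring A] : PowerSeries (PowerSeries A) := PowerSeries.X

end GenericSeries

section RTT

variable {A : Type*} [Ring A] [Algebra ℂ A]

/-- Left-hand side of the defining relation of `X(osp_{1|2n})` for a family `t` of series
coefficients: `(u−v)(u−v−κ)·[t_{ij}(u), t_{kl}(v)]` (super-commutator), multiplied by `(xy)²`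
to clear denominators; here `x = u⁻¹`, `y = v⁻¹`. -/
def relL (n : ℕ) (t : Fin (NN n) → Fin (NN n) → ℕ → A) (i j k l : Fin (NN n)) :
    PowerSeries (PowerSeries A) :=
  (Yv A - Xv A) * (Yv A - Xv A - kappa n • (Xv A * Yv A)) *
    (Tx t i j * Ty t k l - sg ((pb i + pb j) * (pb k + pb l)) • (Ty t k l * Tx t i j))

/-- Right-hand side of the defining relation of `X(osp_{1|2n})`:
`(u−v−κ)·A − (u−v)·B` multiplied by `(xy)²`, where
`A = (−1)^{īj̄+īk̄+j̄k̄} (t_{kj}(u)t_{il}(v) − t_{kj}(v)t_{il}(u))` and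
`B = δ_{k i′} Σ_p (−1)^{ī+īj̄+j̄p̄} τ_iτ_p t_{pj}(u)t_{p′l}(v)
   − δ_{l j′} Σ_p (−1)^{j̄+p̄+īk̄+j̄k̄+īp̄} τ_jτ_p t_{kp′}(v)t_{ip}(u)`. -/
def relR (n : ℕ) (t : Fin (NN n) → Fin (NN n) → ℕ → A) (i j k l : Fin (NN n)) :
    PowerSeries (PowerSeries A) :=
  (Xv A * Yv A) * (Yv A - Xv A - kappa n • (Xv A * Yv A)) *
    (sg (pb i * pb j + pb i * pb k + pb j * pb k) •
      (Tx t k j * Ty t i l - Ty t k j * Tx t i l))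
  - (Xv A * Yv A) * (Yv A - Xv A) *
    ((if k = pr i then
        ∑ p : Fin (NN n), (sg (pb i + pb i * pb j + pb j * pb p) * tau i * tau p) •
          (Tx t p j * Ty t (pr p) l)
      else 0)
     - (if l = pr j then
        ∑ p : Fin (NN n), (sg (pb j + pb p + pb i * pb k + pb j * pb k + pb i * pb p)
            * tau j * tau p) • (Ty t k (pr p) * Tx t i p)
      else 0))

/-- A family of matrix elements `t i j : ℕ → A` (the coefficients of series `t_{ij}(u)`)
satisfies the defining `RTT`-relation of `X(osp_{1|2n})`. -/
def SatisfiesRTT (n : ℕ) (t : Fin (NN n) → Fin (NN n) → ℕ → A) : Prop :=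
  ∀ i j k l : Fin (NN n), relL n t i j k l = relR n t i j k l

end RTT

/-- The free algebra on the generators `t_{ij}^{(r)}`, `r ≥ 1` (the last component `r : ℕ`
encodes the generator `t_{ij}^{(r+1)}`). -/
abbrev FA (n : ℕ) := FreeAlgebra ℂ (Fin (NN n) × Fin (NN n) × ℕ)

/-- The coefficients of the generating series `t_{ij}(u)` in the free algebra:
`t_{ij}^{(0)} = δ_{ij}` and `t_{ij}^{(r)}` is a free generator for `r ≥ 1`. -/
def fgen (n : ℕ) : Fin (NN n) → Fin (NN n) → ℕ → FA n := fun i j r =>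
  if r = 0 then (if i = j then 1 else 0) else FreeAlgebra.ι ℂ (i, j, r - 1)

/-- The defining relations of the extended Yangian: all coefficients of `relL` are identified
with the corresponding coefficients of `relR`. -/
def yrel (n : ℕ) : FA n → FA n → Prop := fun a b =>
  ∃ (i j k l : Fin (NN n)) (r s : ℕ),
    a = PowerSeries.coeff (R := FA n) s
          (PowerSeries.coeff (R := PowerSeries (FA n)) r (relL n (fgen n) i j k l)) ∧
    b = PowerSeries.coeff (R := FA n) s
          (PowerSeries.coeff (R := PowerSeries (FA n)) r (relR n (fgen n) i j k l))

/-- The extended Yangian `X(osp_{1|2n})`. -/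
abbrev XX (n : ℕ) := RingQuot (yrel n)

/-- The coefficient `t_{ij}^{(r)}` of the series `t_{ij}(u) = Σ_{r≥0} t_{ij}^{(r)} u^{−r}`
in the extended Yangian (`TT n i j 0 = δ_{ij}`). -/
def TT (n : ℕ) (i j : Fin (NN n)) (r : ℕ) : XX n :=
  RingQuot.mkAlgHom ℂ (yrel n) (fgen n i j r)

section Shift

variable {M : Type*} [AddCommMonoid M] [Module ℂ M]

/-- The coefficient of `u^{−s}` in `f(u+a)`, where `f(u) = Σ_r c r · u^{−r}`:
`Σ_{r≤s} (−1)^{s−r} C(s−1, s−r) a^{s−r} · c r`. -/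
def shiftCoeff (a : ℂ) (c : ℕ → M) (s : ℕ) : M :=
  ∑ r ∈ Finset.range (s + 1),
    ((-1 : ℂ) ^ (s - r) * (Nat.choose (s - 1) (s - r) : ℂ) * a ^ (s - r)) • c r

/-- For a power series `f` in `u⁻¹`, the power series of `f(u+a)` in `u⁻¹`. -/
def shiftSeries (a : ℂ) (f : PowerSeries ℂ) : PowerSeries ℂ :=
  PowerSeries.mk fun s => shiftCoeff a (fun r => PowerSeries.coeff (R := ℂ) r f) s

end Shift

/-- The consistency conditions (3.4) of the paper:
`λ_i(u) λ_{i′}(u+n−i+1/2) = λ_{i+1}(u) λ_{(i+1)′}(u+n−i+1/2)` for `i = 1,…,n`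
(0-based: positions `i` and `i+1` with `i < n`, shift `n − i − 1/2`). -/
def Consistent (n : ℕ) (lam : Fin (NN n) → PowerSeries ℂ) : Prop :=
  ∀ (i : ℕ) (h : i < n),
    lam (idx i (by omega)) *
        shiftSeries ((n : ℂ) - (i : ℂ) - 1 / 2) (lam (pr (idx i (by omega)))) =
      lam (idx (i + 1) (by omega)) *
        shiftSeries ((n : ℂ) - (i : ℂ) - 1 / 2) (lam (pr (idx (i + 1) (by omega))))

/-- `V` is a highest weight module over `X(osp_{1|2n})` with highest vector `xi` and
highest weight `lam` (a tuple of series in `1 + u⁻¹ℂ[[u⁻¹]]`): `xi` is nonzero, generates `V`,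
is annihilated by all `t_{ij}(u)` with `i < j` and is an eigenvector of all `t_{ii}(u)`
with eigenvalue the series `λ_i(u)`. -/
def IsHighestWeight (n : ℕ) {V : Type*} [AddCommGroup V] [Module ℂ V] [Module (XX n) V]
    (xi : V) (lam : Fin (NN n) → PowerSeries ℂ) : Prop :=
  xi ≠ 0 ∧ Submodule.span (XX n) {xi} = ⊤ ∧
  (∀ i j : Fin (NN n), i < j → ∀ r : ℕ, TT n i j r • xi = 0) ∧
  (∀ (i : Fin (NN n)) (r : ℕ), TT n i i r • xi = (PowerSeries.coeff (R := ℂ) r (lam i)) • xi) ∧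
  (∀ i : Fin (NN n), PowerSeries.constantCoeff (R := ℂ) (lam i) = 1)

/-- The generators of the left ideal defining the Verma module `M(λ(u))`: all coefficients
`t_{ij}^{(r)}`, `r ≥ 1`, with `i < j`, and all `t_{ii}^{(r)} − λ_i^{(r)}`, `r ≥ 1`. -/
def vermaGens (n : ℕ) (lam : Fin (NN n) → PowerSeries ℂ) : Set (XX n) :=
  {x | (∃ (i j : Fin (NN n)) (r : ℕ), i < j ∧ x = TT n i j (r + 1)) ∨
       (∃ (i : Fin (NN n)) (r : ℕ),
         x = TT n i i (r + 1) - algebraMap ℂ (XX n) (PowerSeries.coeff (R := ℂ) (r + 1) (lam i)))}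

/-- The left ideal defining the Verma module `M(λ(u))`. -/
def vermaIdeal (n : ℕ) (lam : Fin (NN n) → PowerSeries ℂ) : Submodule (XX n) (XX n) :=
  Submodule.span (XX n) (vermaGens n lam)

/-- The Verma module `M(λ(u))`. -/
abbrev Verma (n : ℕ) (lam : Fin (NN n) → PowerSeries ℂ) :=
  XX n ⧸ vermaIdeal n lam

/-- The sum of all proper submodules of the Verma module `M(λ(u))` (its unique maximal
proper submodule). -/
def vermaRad (n : ℕ) (lam : Fin (NN n) → PowerSeries ℂ) : Submodule (XX n) (Verma n lam) :=
  sSup {W : Submodule (XX n) (Verma n lam) | W ≠ ⊤}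

/-- The irreducible quotient `L(λ(u))` of the Verma module `M(λ(u))`. -/
abbrev Lmod (n : ℕ) (lam : Fin (NN n) → PowerSeries ℂ) :=
  Verma n lam ⧸ vermaRad n lam

/-- The Drinfeld polynomial condition `λ₊(u)/λ₋(u) = P(u+1)/P(u)` for a pair of series
`λ₋(u), λ₊(u) ∈ 1 + u⁻¹ℂ[[u⁻¹]]` and a polynomial `P`, i.e. the equality of series
`λ₊(u)·u^{−deg P}·P(u) = λ₋(u)·u^{−deg P}·P(u+1)`; here `u^{−deg P}·P(u)` is the reversed
polynomial `P.reverse` regarded as a power series in `u⁻¹`. -/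
def DrinfeldPair (lamLow lamHigh : PowerSeries ℂ) (P : Polynomial ℂ) : Prop :=
  lamHigh * ((P.reverse : Polynomial ℂ) : PowerSeries ℂ) =
    lamLow * (((P.comp (Polynomial.X + 1)).reverse : Polynomial ℂ) : PowerSeries ℂ)

end OspYangian
namespace OspYangian

open Finset

section ModuleLemmas

variable {n : ℕ} {V : Type*} [AddCommGroup V] [Module ℂ V] [Module (XX n) V]
  [IsScalarTower ℂ (XX n) V]

theorem smul_comm_alg (c : ℂ) (x : XX n) (v : V) : x • (c • v) = c • (x • v) := by
  rw [← algebraMap_smul (XX n) c v, ← mul_smul, ← Algebra.commutes, mul_smul,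
    algebraMap_smul]

end ModuleLemmas

section Vplus

variable (n : ℕ) (V : Type*) [AddCommGroup V] [Module ℂ V] [Module (XX n) V]
  [IsScalarTower ℂ (XX n) V]

/-- The subspace `V⁺ = {η ∈ V | t_{1j}(u)η = 0 (j > 1), t_{i1′}(u)η = 0 (i < 1′)}`
(0-based: first index `0`, last index `2n`). -/
def Vplus : Set V :=
  {η | (∀ j : Fin (NN n), 0 < (j : ℕ) → ∀ r : ℕ, TT n (idx 0 (by omega)) j r • η = 0) ∧
       (∀ i : Fin (NN n), (i : ℕ) < 2 * n → ∀ r : ℕ, TT n i (idx (2 * n) (by omega)) r • η = 0)}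

/-- `V⁺` as a `ℂ`-subspace of `V`. -/
def VplusSub : Submodule ℂ V where
  carrier := Vplus n V
  zero_mem' := ⟨fun _ _ _ => smul_zero _, fun _ _ _ => smul_zero _⟩
  add_mem' := by
    rintro a b ⟨h1, h2⟩ ⟨g1, g2⟩
    exact ⟨fun j hj r => by rw [smul_add, h1 j hj r, g1 j hj r, add_zero],
           fun i hi r => by rw [smul_add, h2 i hi r, g2 i hi r, add_zero]⟩
  smul_mem' := by
    rintro c x ⟨h1, h2⟩
    exact ⟨fun j hj r => by rw [smul_comm_alg, h1 j hj r, smul_zero],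
           fun i hi r => by rw [smul_comm_alg, h2 i hi r, smul_zero]⟩

/-- The subspace `V⁰ = {η ∈ V | t_{ij}(u)η = 0 for all i < j}`. -/
def Vzero : Set V :=
  {η | ∀ i j : Fin (NN n), i < j → ∀ r : ℕ, TT n i j r • η = 0}

end Vplus

/-- The embedding of index sets `{1,…,2n+1} ↪ {1,…,2(n+1)+1}`, `i ↦ i+1`, used in the
reduction from `X(osp_{1|2(n+1)})` to `X(osp_{1|2n})`. -/
def emb {m : ℕ} (i : Fin (NN m)) : Fin (NN (m + 1)) :=
  idx ((i : ℕ) + 1) (by have h : (i : ℕ) < 2 * m + 1 := i.isLt; omega)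

section Yangian

/-- `φ` is the automorphism `t_{ij}(u) ↦ f(u) t_{ij}(u)` of `X(osp_{1|2n})`
for the series `f(u) = Σ_s f_s u^{−s}` with `f_0 = 1`. -/
def IsMultAut (n : ℕ) (f : ℕ → ℂ) (φ : XX n →ₐ[ℂ] XX n) : Prop :=
  f 0 = 1 ∧ ∀ (i j : Fin (NN n)) (r : ℕ),
    φ (TT n i j r) = ∑ s ∈ Finset.range (r + 1), f s • TT n i j (r - s)

/-- The Yangian `Y(osp_{1|2n})`: the subalgebra of `X(osp_{1|2n})` of elements stable under
all the automorphisms `t_{ij}(u) ↦ f(u) t_{ij}(u)`. -/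
def Ysub (n : ℕ) : Subalgebra ℂ (XX n) where
  carrier := {z | ∀ (f : ℕ → ℂ) (φ : XX n →ₐ[ℂ] XX n), IsMultAut n f φ → φ z = z}
  mul_mem' := by
    intro a b ha hb f φ hφ
    rw [map_mul, ha f φ hφ, hb f φ hφ]
  one_mem' := by
    intro f φ hφ
    exact map_one φ
  add_mem' := by
    intro a b ha hb f φ hφ
    rw [map_add, ha f φ hφ, hb f φ hφ]
  zero_mem' := by
    intro f φ hφ
    exact map_zero φ
  algebraMap_mem' := by
    intro c f φ hφ
    exact φ.commutes c

/-- A finite-dimensional irreducible representation of the Yangian `Y(osp_{1|2n})`. -/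
structure FDRep (n : ℕ) where
  carrier : Type
  [ab : AddCommGroup carrier]
  [mc : Module ℂ carrier]
  [my : Module (Ysub n) carrier]
  [tw : IsScalarTower ℂ (Ysub n) carrier]
  fd : FiniteDimensional ℂ carrier
  simple : IsSimpleModule (Ysub n) carrier

attribute [instance] FDRep.ab FDRep.mc FDRep.my FDRep.tw

/-- Isomorphism of representations of `Y(osp_{1|2n})`. -/
def fdrepSetoid (n : ℕ) : Setoid (FDRep n) where
  r V W := Nonempty (V.carrier ≃ₗ[Ysub n] W.carrier)
  iseqv := ⟨fun _ => ⟨LinearEquiv.refl _ _⟩,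
    fun ⟨e⟩ => ⟨e.symm⟩, fun ⟨e⟩ ⟨f⟩ => ⟨e.trans f⟩⟩

end Yangian

end OspYangian
namespace OspYangian

open Finset

section VectorRep

variable (n : ℕ)

/-- The coefficient at `u^{−r}` of the image of `t_{ij}(u)` under the vector representation
`t_{ij}(u) ↦ δ_{ij} + u⁻¹ e_{ij} (−1)^{ī} − (u+κ)⁻¹ e_{j′i′} (−1)^{īj̄} τ_i τ_j`
of `X(osp_{1|2n})` on `ℂ^{1|2n}`, as a matrix. -/
def vecMat (i j : Fin (NN n)) (r : ℕ) : Matrix (Fin (NN n)) (Fin (NN n)) ℂ :=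
  if r = 0 then (if i = j then 1 else 0)
  else (if r = 1 then (sg (pb i)) • Matrix.single i j (1 : ℂ) else 0)
    - ((-(kappa n)) ^ (r - 1) * sg (pb i * pb j) * tau i * tau j) •
        Matrix.single (pr j) (pr i) (1 : ℂ)

/-- The entry at `(a,b)` of the matrix of `t_{ij}(u)` in the vector representation,
as a function of a complex number `u`. -/
def vrepE (u : ℂ) (i j a b : Fin (NN n)) : ℂ :=
  (if i = j ∧ a = b then 1 else 0)
  + u⁻¹ * sg (pb i) * (if a = i ∧ b = j then 1 else 0)
  - (u + kappa n)⁻¹ * sg (pb i * pb j) * tau i * tau j *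
      (if a = pr j ∧ b = pr i then 1 else 0)

/-- The entry at `(a,b)` of the coefficient at `u^{−s}` of the matrix of `t_{ij}(u−m)` in the
vector representation, using `(u−m)⁻¹ = Σ_{s≥1} m^{s−1} u^{−s}` and
`(u−m+κ)⁻¹ = Σ_{s≥1} (m−κ)^{s−1} u^{−s}`. -/
def vrepCE (m : ℂ) (s : ℕ) (i j a b : Fin (NN n)) : ℂ :=
  if s = 0 then (if i = j ∧ a = b then 1 else 0)
  else m ^ (s - 1) * sg (pb i) * (if a = i ∧ b = j then 1 else 0)
    - (m - kappa n) ^ (s - 1) * sg (pb i * pb j) * tau i * tau j *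
        (if a = pr j ∧ b = pr i then 1 else 0)

variable (k : ℕ)

/-- The `k`-fold tensor power `(ℂ^{1|2n})^{⊗k}`, realized as functions on multi-indices. -/
abbrev Wk := (Fin k → Fin (NN n)) → ℂ

/-- The Koszul sign arising when the elementary tensor operator
`t_{a_0 a_1} ⊗ t_{a_1 a_2} ⊗ ⋯ ⊗ t_{a_{k−1} a_k}` (each factor of parity
`p(a_{p−1}) + p(a_p)`) is applied to the basis vector `e_{d_1} ⊗ ⋯ ⊗ e_{d_k}`:
`(−1)^{Σ_p (p(a_{p−1})+p(a_p))·(p(d_1)+⋯+p(d_{p−1}))}`. -/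
def kosz (a : Fin (k + 1) → Fin (NN n)) (d : Fin k → Fin (NN n)) : ℂ :=
  sg (∑ p : Fin k, (pb (a p.castSucc) + pb (a p.succ)) *
    (∑ q : Fin k, if (q : ℕ) < (p : ℕ) then pb (d q) else 0))

/-- The matrix of the operator
`T_{ij}(u) = Σ_{a_1,…,a_{k−1}} t_{i a_1}(u) ⊗ t_{a_1 a_2}(u−1) ⊗ ⋯ ⊗ t_{a_{k−1} j}(u−k+1)`
on `(ℂ^{1|2n})^{⊗k}`, each tensor factor acting through the vector representation and the
tensor products taken with the super sign convention. -/
def TopMat (u : ℂ) (i j : Fin (NN n)) :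
    Matrix (Fin k → Fin (NN n)) (Fin k → Fin (NN n)) ℂ := fun c d =>
  ∑ a : Fin (k + 1) → Fin (NN n),
    if a 0 = i ∧ a (Fin.last k) = j then
      kosz n k a d *
        ∏ p : Fin k, vrepE n (u - ((p : ℕ) : ℂ)) (a p.castSucc) (a p.succ) (c p) (d p)
    else 0

/-- The matrix of the coefficient at `u^{−r}` of the operator `T_{ij}(u)` on
`(ℂ^{1|2n})^{⊗k}` (sum over compositions `r = r_1 + ⋯ + r_k` of products of coefficients of
the shifted vector representations). -/
def TopCMat (r : ℕ) (i j : Fin (NN n)) :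
    Matrix (Fin k → Fin (NN n)) (Fin k → Fin (NN n)) ℂ := fun c d =>
  ∑ a : Fin (k + 1) → Fin (NN n),
    if a 0 = i ∧ a (Fin.last k) = j then
      kosz n k a d *
        ∑ rr ∈ Finset.Nat.antidiagonalTuple k r,
          ∏ p : Fin k, vrepCE n ((p : ℕ) : ℂ) (rr p) (a p.castSucc) (a p.succ) (c p) (d p)
    else 0

/-- The antisymmetric vector `ξ_k = Σ_{σ ∈ S_k} sgn(σ) e_{σ(1)} ⊗ ⋯ ⊗ e_{σ(k)}`. -/
def xiVec (hk : k ≤ NN n) : Wk n k := fun c =>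
  ∑ σ : Equiv.Perm (Fin k),
    ((Equiv.Perm.sign σ : ℤ) : ℂ) * (if c = fun p => Fin.castLE hk (σ p) then 1 else 0)

end VectorRep

section SuperTranspose

variable (n : ℕ)

/-- The super-transposition `t : End ℂ^{1|2n} → End ℂ^{1|2n}`, the linear extension of
`e_{ij} ↦ e_{j′i′} (−1)^{īj̄+ī} τ_i τ_j`. -/
def stpM (A : Matrix (Fin (NN n)) (Fin (NN n)) ℂ) : Matrix (Fin (NN n)) (Fin (NN n)) ℂ :=
  ∑ i : Fin (NN n), ∑ j : Fin (NN n),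
    (A i j * sg (pb i * pb j + pb i) * tau i * tau j) •
      Matrix.single (pr j) (pr i) (1 : ℂ)

/-- `End(ℂ^{1|2n}) ⊗ End(ℂ^{1|2n})` realized as operators on `ℂ^{1|2n} ⊗ ℂ^{1|2n}`. -/
abbrev MatP := Matrix (Fin (NN n) × Fin (NN n)) (Fin (NN n) × Fin (NN n)) ℂ

/-- The elementary tensor `e_{ij} ⊗ e_{kl}` as an operator on `ℂ^{1|2n} ⊗ ℂ^{1|2n}`,
with the Koszul sign convention `(a ⊗ b)(v ⊗ w) = (−1)^{|b||v|} av ⊗ bw`. -/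
def elemT2 (i j k l : Fin (NN n)) : MatP n := fun x y =>
  if x = (i, k) ∧ y = (j, l) then sg ((pb k + pb l) * pb j) else 0

/-- The operator `P = Σ_{i,j} e_{ij} ⊗ e_{ji} (−1)^{j̄}`. -/
def Pmat : MatP n := ∑ i : Fin (NN n), ∑ j : Fin (NN n), sg (pb j) • elemT2 n i j j i

/-- The operator `Q = Σ_{i,j} e_{ij} ⊗ e_{i′j′} (−1)^{īj̄} τ_i τ_j`. -/
def Qmat : MatP n := ∑ i : Fin (NN n), ∑ j : Fin (NN n),
  (sg (pb i * pb j) * tau i * tau j) • elemT2 n i j (pr i) (pr j)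

/-- The super-transposition applied to the first tensor factor of
`End(ℂ^{1|2n}) ⊗ End(ℂ^{1|2n})`: extract the coefficients of `M` on elementary tensors
`e_{ij} ⊗ e_{kl}` and apply `t(e_{ij}) = e_{j′i′}(−1)^{īj̄+ī}τ_iτ_j`. -/
def stp1 (M : MatP n) : MatP n :=
  ∑ i : Fin (NN n), ∑ j : Fin (NN n), ∑ k : Fin (NN n), ∑ l : Fin (NN n),
    (M (i, k) (j, l) * sg ((pb k + pb l) * pb j) * sg (pb i * pb j + pb i) * tau i * tau j) •
      elemT2 n (pr j) (pr i) k l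

/-- The super-transposition applied to the second tensor factor. -/
def stp2 (M : MatP n) : MatP n :=
  ∑ i : Fin (NN n), ∑ j : Fin (NN n), ∑ k : Fin (NN n), ∑ l : Fin (NN n),
    (M (i, k) (j, l) * sg ((pb k + pb l) * pb j) * sg (pb k * pb l + pb k) * tau k * tau l) •
      elemT2 n i j (pr l) (pr k)

/-- `End(ℂ^{1|2n})^{⊗3}` realized as operators on `(ℂ^{1|2n})^{⊗3}`. -/
abbrev Mat3 := Matrix (Fin (NN n) × Fin (NN n) × Fin (NN n))
  (Fin (NN n) × Fin (NN n) × Fin (NN n)) ℂ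

/-- The elementary tensor `e_{ij} ⊗ e_{kl} ⊗ e_{mp}` as an operator on `(ℂ^{1|2n})^{⊗3}`
with the Koszul sign convention. -/
def elemT3 (i j k l m p : Fin (NN n)) : Mat3 n := fun x y =>
  if x = (i, k, m) ∧ y = (j, l, p) then
    sg ((pb k + pb l) * pb j + (pb m + pb p) * (pb j + pb l))
  else 0

/-- `P` placed in the tensor factors 1 and 2 of `End(ℂ^{1|2n})^{⊗3}`. -/
def P12 : Mat3 n := ∑ i : Fin (NN n), ∑ j : Fin (NN n), ∑ m : Fin (NN n),
  sg (pb j) • elemT3 n i j j i m m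

/-- `P` placed in the tensor factors 1 and 3. -/
def P13 : Mat3 n := ∑ i : Fin (NN n), ∑ j : Fin (NN n), ∑ m : Fin (NN n),
  sg (pb j) • elemT3 n i j m m j i

/-- `P` placed in the tensor factors 2 and 3. -/
def P23 : Mat3 n := ∑ i : Fin (NN n), ∑ j : Fin (NN n), ∑ m : Fin (NN n),
  sg (pb j) • elemT3 n m m i j j i

/-- `Q` placed in the tensor factors 1 and 2. -/
def Q12 : Mat3 n := ∑ i : Fin (NN n), ∑ j : Fin (NN n), ∑ m : Fin (NN n),
  (sg (pb i * pb j) * tau i * tau j) • elemT3 n i j (pr i) (pr j) m m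

/-- `Q` placed in the tensor factors 1 and 3. -/
def Q13 : Mat3 n := ∑ i : Fin (NN n), ∑ j : Fin (NN n), ∑ m : Fin (NN n),
  (sg (pb i * pb j) * tau i * tau j) • elemT3 n i j m m (pr i) (pr j)

/-- `Q` placed in the tensor factors 2 and 3. -/
def Q23 : Mat3 n := ∑ i : Fin (NN n), ∑ j : Fin (NN n), ∑ m : Fin (NN n),
  (sg (pb i * pb j) * tau i * tau j) • elemT3 n m m i j (pr i) (pr j)

/-- The `R`-matrix `R(w) = 1 − P/w + Q/(w−κ)` with `P`, `Q` placed in a given pair of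
tensor factors. -/
def Rmat3 (Pm Qm : Mat3 n) (w : ℂ) : Mat3 n :=
  1 - w⁻¹ • Pm + (w - kappa n)⁻¹ • Qm

end SuperTranspose

section glYangian

/-- The free algebra on the generators `t°_{ij}^{(r)}`, `r ≥ 1`, of the Yangian `Y(gl_N)`. -/
abbrev FGl (N : ℕ) := FreeAlgebra ℂ (Fin N × Fin N × ℕ)

/-- The coefficients of the generating series `t°_{ij}(u)` of `Y(gl_N)` in the free algebra. -/
def glgen (N : ℕ) : Fin N → Fin N → ℕ → FGl N := fun i j r =>
  if r = 0 then (if i = j then 1 else 0) else FreeAlgebra.ι ℂ (i, j, r - 1)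

/-- Left-hand side of the defining relation of `Y(gl_N)`:
`(u−v)[t°_{ij}(u), t°_{kl}(v)]` multiplied by `xy` (`x = u⁻¹`, `y = v⁻¹`). -/
def relLgl (N : ℕ) (t : Fin N → Fin N → ℕ → FGl N) (i j k l : Fin N) :
    PowerSeries (PowerSeries (FGl N)) :=
  (Yv (FGl N) - Xv (FGl N)) * (Tx t i j * Ty t k l - Ty t k l * Tx t i j)

/-- Right-hand side of the defining relation of `Y(gl_N)`:
`t°_{kj}(u)t°_{il}(v) − t°_{kj}(v)t°_{il}(u)` multiplied by `xy`. -/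
def relRgl (N : ℕ) (t : Fin N → Fin N → ℕ → FGl N) (i j k l : Fin N) :
    PowerSeries (PowerSeries (FGl N)) :=
  (Xv (FGl N) * Yv (FGl N)) * (Tx t k j * Ty t i l - Ty t k j * Tx t i l)

/-- The defining relations of `Y(gl_N)`. -/
def glrel (N : ℕ) : FGl N → FGl N → Prop := fun a b =>
  ∃ (i j k l : Fin N) (r s : ℕ),
    a = PowerSeries.coeff (R := FGl N) s
          (PowerSeries.coeff (R := PowerSeries (FGl N)) r (relLgl N (glgen N) i j k l)) ∧
    b = PowerSeries.coeff (R := FGl N) s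
          (PowerSeries.coeff (R := PowerSeries (FGl N)) r (relRgl N (glgen N) i j k l))

/-- The Yangian `Y(gl_N)`. -/
abbrev Ygl (N : ℕ) := RingQuot (glrel N)

/-- The generator `t°_{ij}^{(r)}` of `Y(gl_N)` (`TG N i j 0 = δ_{ij}`). -/
def TG (N : ℕ) (i j : Fin N) (r : ℕ) : Ygl N :=
  RingQuot.mkAlgHom ℂ (glrel N) (glgen N i j r)

/-- The embedding of index sets `{1,…,n} ↪ {1,…,2n+1}` used for `Y(gl_n) ↪ X(osp_{1|2n})`. -/
def embgl {n : ℕ} (i : Fin n) : Fin (NN n) :=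
  idx (i : ℕ) (by have h : (i : ℕ) < n := i.isLt; omega)

end glYangian

/-- `k ≤ n` implies `k ≤ 2n+1`. -/
theorem le_NN {k n : ℕ} (h : k ≤ n) : k ≤ NN n := by
  have h2 : k ≤ 2 * n + 1 := by omega
  exact h2



end OspYangian

/-!
Let `η ∈ V⁺`, `k ≠ 1′` and `l ≠ 1`. Apply the defining relation for `[t_{1b}(u), t_{kl}(v)]`
to `η`: since `t_{1b}`, `t_{1l}` kill `η`, what survives is
`(u−v)(u−v−κ) t_{1b}(u) t_{kl}(v) η` on the left and, on the right, only a multiple of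
`t_{k1′}(v) t_{11}(u) η`. This last vector vanishes as well: the relation for
`[t_{11}(u), t_{k1′}(v)]` applied to `η` collapses to `(u−v)(u−v−κ−1) t_{k1′}(v) t_{11}(u) η = 0`.
Multiplication by `u−v−c` is injective on `V`-valued series in `u⁻¹, v⁻¹`, so
`t_{1b}(u) t_{kl}(v) η = 0`. The conditions `t_{a1′}(v) t_{kl}(u) η = 0` follow in the same way
from the relations for `[t_{kl}(u), t_{a1′}(v)]` and `[t_{1j}(u), t_{1′1′}(v)]`.
-/

noncomputable section

namespace OspYangian

section Indices

variable {n : ℕ}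

def firstIdx (n : ℕ) : Fin (NN n) := idx 0 (by omega)

def lastIdx (n : ℕ) : Fin (NN n) := idx (2 * n) (by omega)

theorem val_pos_iff_ne_firstIdx {i : Fin (NN n)} : 0 < (i : ℕ) ↔ i ≠ firstIdx n := by
  rw [Ne, Fin.ext_iff]
  simp only [firstIdx, idx]
  omega

theorem val_lt_iff_ne_lastIdx {i : Fin (NN n)} : (i : ℕ) < 2 * n ↔ i ≠ lastIdx n := by
  have : (i : ℕ) < 2 * n + 1 := i.isLt
  rw [Ne, Fin.ext_iff]
  simp only [lastIdx, idx]
  omega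

theorem pr_firstIdx : pr (firstIdx n) = lastIdx n := rfl

theorem pr_eq_lastIdx_iff {i : Fin (NN n)} : pr i = lastIdx n ↔ i = firstIdx n := by
  have : (i : ℕ) < 2 * n + 1 := i.isLt
  simp only [Fin.ext_iff, pr, lastIdx, firstIdx, idx]
  omega

theorem firstIdx_ne_lastIdx (hn : n ≠ 0) : firstIdx n ≠ lastIdx n :=
  val_lt_iff_ne_lastIdx.1 (by simp only [firstIdx, idx]; omega)

theorem pb_firstIdx (hn : n ≠ 0) : pb (firstIdx n) = 1 :=
  if_neg (Ne.symm hn)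

theorem tau_firstIdx : tau (firstIdx n) = 1 :=
  if_pos (Nat.zero_le n)

theorem sg_of_even {m : ℕ} (h : Even m) : sg m = 1 := h.neg_one_pow

theorem sg_of_odd {m : ℕ} (h : Odd m) : sg m = -1 := h.neg_one_pow

theorem sg_ne_zero (m : ℕ) : sg m ≠ 0 := pow_ne_zero _ (neg_ne_zero.2 one_ne_zero)

end Indices

section DoubleSequences

variable {V : Type*} [AddCommGroup V] [Module ℂ V]

/-- Double sequences `S r s` stand for series in `y = v⁻¹` (index `r`) and `x = u⁻¹`
(index `s`); `mulDiff c` below is multiplication by `y − x − c·xy = xy·(u − v − c)`. -/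
def shiftY : (ℕ → ℕ → V) →ₗ[ℂ] (ℕ → ℕ → V) where
  toFun S r s := if r = 0 then 0 else S (r - 1) s
  map_add' S T := by ext r s; simp only [Pi.add_apply]; split_ifs <;> simp
  map_smul' c S := by ext r s; simp only [Pi.smul_apply, RingHom.id_apply]; split_ifs <;> simp

def shiftX : (ℕ → ℕ → V) →ₗ[ℂ] (ℕ → ℕ → V) where
  toFun S r s := if s = 0 then 0 else S r (s - 1)
  map_add' S T := by ext r s; simp only [Pi.add_apply]; split_ifs <;> simp
  map_smul' c S := by ext r s; simp only [Pi.smul_apply, RingHom.id_apply]; split_ifs <;> simp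

def mulDiff (c : ℂ) : (ℕ → ℕ → V) →ₗ[ℂ] (ℕ → ℕ → V) :=
  shiftY - shiftX - c • (shiftX ∘ₗ shiftY)

theorem mulDiff_apply_zero_succ (c : ℂ) (S : ℕ → ℕ → V) (s : ℕ) :
    mulDiff c S 0 (s + 1) = -S 0 s := by
  simp [mulDiff, shiftX, shiftY]

theorem mulDiff_apply_succ_succ (c : ℂ) (S : ℕ → ℕ → V) (r s : ℕ) :
    mulDiff c S (r + 1) (s + 1) = S r (s + 1) - S (r + 1) s - c • S r s := by
  simp [mulDiff, shiftX, shiftY]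

theorem mulDiff_injective (c : ℂ) : Function.Injective (mulDiff (V := V) c) := by
  refine (injective_iff_map_eq_zero _).2 fun S hS => funext fun r => ?_
  induction r with
  | zero =>
    funext s
    simpa [mulDiff_apply_zero_succ] using congrFun (congrFun hS 0) (s + 1)
  | succ r ih =>
    funext s
    simpa [mulDiff_apply_succ_succ, ih] using congrFun (congrFun hS (r + 1)) (s + 1)

theorem mulDiff_eq_zero_iff {c : ℂ} {S : ℕ → ℕ → V} : mulDiff c S = 0 ↔ S = 0 :=
  map_eq_zero_iff _ (mulDiff_injective c)

theorem mulDiff_shiftX_shiftY (c : ℂ) (S : ℕ → ℕ → V) :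
    mulDiff c (shiftX (shiftY S)) = shiftX (shiftY (mulDiff c S)) := by
  funext r s
  rcases r with _ | r <;> rcases s with _ | s <;> simp [mulDiff, shiftX, shiftY]

theorem mulDiff_add_one (c : ℂ) (S : ℕ → ℕ → V) :
    mulDiff (c + 1) S = mulDiff c S - shiftX (shiftY S) := by
  simp only [mulDiff, add_smul, one_smul, LinearMap.sub_apply, LinearMap.add_apply,
    LinearMap.smul_apply, LinearMap.comp_apply]
  abel

theorem eq_zero_of_mulDiff_mulDiff_eq {c : ℂ} {S : ℕ → ℕ → V}
    (h : mulDiff 0 (mulDiff c S) = shiftX (shiftY (mulDiff 0 S))) : S = 0 := by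
  rw [← mulDiff_shiftX_shiftY, ← sub_eq_zero, ← map_sub, ← mulDiff_add_one] at h
  simpa only [mulDiff_eq_zero_iff] using h

end DoubleSequences

section Products

variable {n : ℕ} {V : Type*} [AddCommGroup V] [Module (XX n) V]

/-- `actUV η i j k l = t_{ij}(u) t_{kl}(v) η` and `actVU η k l i j = t_{kl}(v) t_{ij}(u) η`. -/
def actUV (η : V) (i j k l : Fin (NN n)) : ℕ → ℕ → V :=
  fun r s => TT n i j s • TT n k l r • η

def actVU (η : V) (k l i j : Fin (NN n)) : ℕ → ℕ → V :=
  fun r s => TT n k l r • TT n i j s • η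

theorem actUV_eq_zero {η : V} {k l : Fin (NN n)} (h : ∀ r, TT n k l r • η = 0)
    (i j : Fin (NN n)) : actUV η i j k l = 0 := by
  ext r s
  simp [actUV, h]

theorem actVU_eq_zero {η : V} {i j : Fin (NN n)} (h : ∀ s, TT n i j s • η = 0)
    (k l : Fin (NN n)) : actVU η k l i j = 0 := by
  ext r s
  simp [actVU, h]

theorem mem_Vplus_iff {η : V} : η ∈ Vplus n V ↔
    (∀ j ≠ firstIdx n, ∀ r, TT n (firstIdx n) j r • η = 0) ∧
      ∀ i ≠ lastIdx n, ∀ r, TT n i (lastIdx n) r • η = 0 := by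
  simp only [Vplus, Set.mem_ofPred_eq, val_pos_iff_ne_firstIdx, val_lt_iff_ne_lastIdx]
  rfl

theorem sum_smul_actVU_firstIdx [Module ℂ V] {η : V}
    (h₁ : ∀ j ≠ firstIdx n, ∀ r, TT n (firstIdx n) j r • η = 0) (c : Fin (NN n) → ℂ)
    (k : Fin (NN n)) :
    ∑ p, c p • actVU η k (pr p) (firstIdx n) p =
      c (firstIdx n) • actVU η k (lastIdx n) (firstIdx n) (firstIdx n) := by
  refine Finset.sum_eq_single_of_mem _ (Finset.mem_univ _) fun p _ hp => ?_
  rw [actVU_eq_zero (h₁ p hp), smul_zero]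

theorem sum_smul_actUV_lastIdx [Module ℂ V] {η : V}
    (h₂ : ∀ i ≠ lastIdx n, ∀ r, TT n i (lastIdx n) r • η = 0) (c : Fin (NN n) → ℂ)
    (j : Fin (NN n)) :
    ∑ p, c p • actUV η p j (pr p) (lastIdx n) =
      c (firstIdx n) • actUV η (firstIdx n) j (lastIdx n) (lastIdx n) := by
  refine Finset.sum_eq_single_of_mem _ (Finset.mem_univ _) fun p _ hp => ?_
  rw [actUV_eq_zero (h₂ _ (mt pr_eq_lastIdx_iff.1 hp)), smul_zero]

end Products

section Evaluation

variable {n : ℕ} {V : Type*} [AddCommGroup V] [Module ℂ V] [Module (XX n) V]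
  [IsScalarTower ℂ (XX n) V]

def evalAt (η : V) : PowerSeries (PowerSeries (FA n)) →ₗ[ℂ] (ℕ → ℕ → V) where
  toFun F r s :=
    RingQuot.mkAlgHom ℂ (yrel n) (PowerSeries.coeff s (PowerSeries.coeff r F)) • η
  map_add' F G := by ext r s; simp [add_smul]
  map_smul' c F := by ext r s; simp [smul_assoc]

theorem evalAt_Yv_mul (η : V) (F : PowerSeries (PowerSeries (FA n))) :
    evalAt η (Yv (FA n) * F) = shiftY (evalAt η F) := by
  ext r s
  rcases r with _ | r <;> simp [evalAt, shiftY, Yv, PowerSeries.coeff_succ_X_mul]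

theorem evalAt_Xv_mul (η : V) (F : PowerSeries (PowerSeries (FA n))) :
    evalAt η (Xv (FA n) * F) = shiftX (evalAt η F) := by
  ext r s
  rcases s with _ | s <;> simp [evalAt, shiftX, Xv, PowerSeries.coeff_succ_X_mul]

theorem evalAt_mulDiff (η : V) (c : ℂ) (F : PowerSeries (PowerSeries (FA n))) :
    evalAt η ((Yv (FA n) - Xv (FA n) - c • (Xv (FA n) * Yv (FA n))) * F) =
      mulDiff c (evalAt η F) := by
  simp only [sub_mul, smul_mul_assoc, mul_assoc, map_sub, map_smul, evalAt_Yv_mul,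
    evalAt_Xv_mul]
  rfl

theorem evalAt_Tx_mul_Ty (η : V) (i j k l : Fin (NN n)) :
    evalAt η (Tx (fgen n) i j * Ty (fgen n) k l) = actUV η i j k l := by
  ext r s
  simp only [evalAt, Tx, Ty, LinearMap.coe_mk, AddHom.coe_mk, PowerSeries.coeff_C_mul,
    PowerSeries.coeff_mk, PowerSeries.coeff_mul_C, map_mul, mul_smul]
  rfl

theorem evalAt_Ty_mul_Tx (η : V) (i j k l : Fin (NN n)) :
    evalAt η (Ty (fgen n) k l * Tx (fgen n) i j) = actVU η k l i j := by
  ext r s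
  simp only [evalAt, Tx, Ty, LinearMap.coe_mk, AddHom.coe_mk, PowerSeries.coeff_C_mul,
    PowerSeries.coeff_mk, PowerSeries.coeff_mul_C, map_mul, mul_smul]
  rfl

theorem rtt_apply (η : V) (i j k l : Fin (NN n)) :
    mulDiff 0 (mulDiff (kappa n)
        (actUV η i j k l - sg ((pb i + pb j) * (pb k + pb l)) • actVU η k l i j)) =
      shiftX (shiftY (mulDiff (kappa n)
        (sg (pb i * pb j + pb i * pb k + pb j * pb k) • (actUV η k j i l - actVU η k j i l))))
      - shiftX (shiftY (mulDiff 0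
        ((if k = pr i then
            ∑ p : Fin (NN n), (sg (pb i + pb i * pb j + pb j * pb p) * tau i * tau p) •
              actUV η p j (pr p) l
          else 0)
        - (if l = pr j then
            ∑ p : Fin (NN n), (sg (pb j + pb p + pb i * pb k + pb j * pb k + pb i * pb p)
                * tau j * tau p) • actVU η k (pr p) i p
          else 0)))) := by
  have H : evalAt η (relL n (fgen n) i j k l) = evalAt η (relR n (fgen n) i j k l) := by
    ext r s
    exact congrArg (· • η) (RingQuot.mkAlgHom_rel ℂ (s := yrel n) ⟨i, j, k, l, r, s, rfl, rfl⟩)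
  have hYX : ∀ F, evalAt η ((Yv (FA n) - Xv (FA n)) * F) = mulDiff 0 (evalAt η F) := by
    intro F
    simpa using evalAt_mulDiff η 0 F
  simp only [relL, relR, mul_assoc, hYX, evalAt_mulDiff, evalAt_Xv_mul, evalAt_Yv_mul, map_sub,
    map_smul, apply_ite (evalAt η), map_zero, map_sum, evalAt_Tx_mul_Ty, evalAt_Ty_mul_Tx] at H
  simpa only [map_sub, map_smul, mul_assoc] using H

end Evaluation

section Stability

variable {n : ℕ} {V : Type*} [AddCommGroup V] [Module ℂ V] [Module (XX n) V]
  [IsScalarTower ℂ (XX n) V]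

theorem actVU_lastCol_firstDiag_eq_zero (hn : n ≠ 0) {η : V} (hη : η ∈ Vplus n V)
    {k : Fin (NN n)} (hk : k ≠ lastIdx n) :
    actVU η k (lastIdx n) (firstIdx n) (firstIdx n) = 0 := by
  obtain ⟨h₁, h₂⟩ := mem_Vplus_iff.1 hη
  have hsign_odd : sg (1 + 1 + pb k + pb k + 1) = -1 := sg_of_odd ⟨pb k + 1, by ring⟩
  have hsign_even : sg ((1 + 1) * (pb k + pb (lastIdx n))) = 1 :=
    sg_of_even (Even.mul_right ⟨1, rfl⟩ _)
  have H := rtt_apply η (firstIdx n) (firstIdx n) k (lastIdx n)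
  simp only [sum_smul_actVU_firstIdx h₁, pr_firstIdx, hk, if_false, if_true,
    actUV_eq_zero (h₂ k hk), actUV_eq_zero (h₂ _ (firstIdx_ne_lastIdx hn)), actVU_eq_zero (h₂ _ (firstIdx_ne_lastIdx hn)),
    pb_firstIdx hn, tau_firstIdx, mul_one, one_mul, hsign_odd, hsign_even, one_smul, neg_one_smul,
    smul_zero, sub_self, map_zero, zero_sub, map_neg, neg_neg, neg_inj] at H
  exact eq_zero_of_mulDiff_mulDiff_eq H

theorem actUV_firstRow_lastDiag_eq_zero (hn : n ≠ 0) {η : V} (hη : η ∈ Vplus n V)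
    {j : Fin (NN n)} (hj : j ≠ firstIdx n) :
    actUV η (firstIdx n) j (lastIdx n) (lastIdx n) = 0 := by
  obtain ⟨h₁, h₂⟩ := mem_Vplus_iff.1 hη
  have hj' : lastIdx n ≠ pr j := fun h => hj (pr_eq_lastIdx_iff.1 h.symm)
  have hsign : sg (1 + pb j + pb j) = -1 := sg_of_odd ⟨pb j, by ring⟩
  have H := rtt_apply η (firstIdx n) j (lastIdx n) (lastIdx n)
  simp only [sum_smul_actUV_lastIdx h₂, pr_firstIdx, if_true, hj', if_false,
    actVU_eq_zero (h₁ j hj), actUV_eq_zero (h₂ _ (firstIdx_ne_lastIdx hn)),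
    actVU_eq_zero (h₂ _ (firstIdx_ne_lastIdx hn)), pb_firstIdx hn, tau_firstIdx, mul_one, one_mul,
    hsign, neg_one_smul, smul_zero, sub_self, map_zero, sub_zero, map_neg, sub_neg_eq_add,
    zero_add] at H
  exact eq_zero_of_mulDiff_mulDiff_eq H

theorem actUV_firstRow_eq_zero (hn : n ≠ 0) {η : V} (hη : η ∈ Vplus n V)
    {b k l : Fin (NN n)} (hb : b ≠ firstIdx n) (hk : k ≠ lastIdx n) (hl : l ≠ firstIdx n) :
    actUV η (firstIdx n) b k l = 0 := by
  obtain ⟨h₁, -⟩ := mem_Vplus_iff.1 hη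
  have H := rtt_apply η (firstIdx n) b k l
  simp only [sum_smul_actVU_firstIdx h₁, actVU_lastCol_firstDiag_eq_zero hn hη hk, pr_firstIdx,
    hk, if_false, actVU_eq_zero (h₁ b hb), actUV_eq_zero (h₁ l hl), actVU_eq_zero (h₁ l hl),
    smul_zero, ite_self, sub_self, sub_zero, map_zero] at H
  simpa only [mulDiff_eq_zero_iff] using H

theorem actVU_lastCol_eq_zero (hn : n ≠ 0) {η : V} (hη : η ∈ Vplus n V)
    {a k l : Fin (NN n)} (ha : a ≠ lastIdx n) (hk : k ≠ lastIdx n) (hl : l ≠ firstIdx n) :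
    actVU η a (lastIdx n) k l = 0 := by
  obtain ⟨-, h₂⟩ := mem_Vplus_iff.1 hη
  have hl' : lastIdx n ≠ pr l := fun h => hl (pr_eq_lastIdx_iff.1 h.symm)
  have H := rtt_apply η k l a (lastIdx n)
  simp only [sum_smul_actUV_lastIdx h₂, actUV_firstRow_lastDiag_eq_zero hn hη hl, hl', if_false,
    actUV_eq_zero (h₂ a ha), actUV_eq_zero (h₂ k hk), actVU_eq_zero (h₂ k hk),
    smul_zero, ite_self, sub_self, zero_sub, map_zero, map_neg, neg_eq_zero] at H
  simpa only [map_smul, smul_eq_zero, mulDiff_eq_zero_iff, sg_ne_zero, false_or] using H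

end Stability

theorem vplus_stable_general
    (n : ℕ) (hn : 2 ≤ n) (V : Type) [AddCommGroup V]
    [Module (XX n) V]
    (η : V) (hη : η ∈ Vplus n V)
    (i j : Fin (NN n)) (hi2 : (i : ℕ) < 2 * n)
    (hj1 : 1 ≤ (j : ℕ)) (r : ℕ) :
    TT n i j r • η ∈ Vplus n V := by
  let _ : Module ℂ V := Module.compHom V (algebraMap ℂ (XX n))
  have _ : IsScalarTower ℂ (XX n) V := IsScalarTower.of_algebraMap_smul fun _ _ => rfl
  have hn' : n ≠ 0 := by omega
  have hi : i ≠ lastIdx n := val_lt_iff_ne_lastIdx.1 hi2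
  have hj : j ≠ firstIdx n := val_pos_iff_ne_firstIdx.1 hj1
  refine mem_Vplus_iff.2 ⟨fun b hb s => ?_, fun a ha s => ?_⟩
  · exact congrFun (congrFun (actUV_firstRow_eq_zero hn' hη hb hi hj) r) s
  · exact congrFun (congrFun (actVU_lastCol_eq_zero hn' hη ha hi hj) s) r

/-- For a module `V` over `X(osp_{1|2n})` with `n ≥ 2`, the subspace `V⁺`
is stable under all the operators `t_{ij}(u)` with `2 ≤ i,j ≤ 2n` (0-based:
`1 ≤ i,j ≤ 2n−1`). -/
theorem vplus_stable
    (n : ℕ) (hn : 2 ≤ n) (V : Type) [AddCommGroup V] [Module ℂ V]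
    [Module (XX n) V] [IsScalarTower ℂ (XX n) V]
    (η : V) (hη : η ∈ Vplus n V)
    (i j : Fin (NN n)) (hi1 : 1 ≤ (i : ℕ)) (hi2 : (i : ℕ) < 2 * n)
    (hj1 : 1 ≤ (j : ℕ)) (hj2 : (j : ℕ) < 2 * n) (r : ℕ) :
    TT n i j r • η ∈ Vplus n V :=
  vplus_stable_general n hn V η hη i j hi2 hj1 r

end OspYangian

end
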